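/- arXiv:2302.00343 — 2 statements merged into one kernel-verified Lean document; each statement's English description precedes it below -/
import Mathlib

section
/- Let ℓ ≥ 2 and fix integers c_i ≤ d_i for i ∈ [ℓ]. Define φ_ℓ^k(i) := [1 − min{ℓ−i+1,k} + c_i, d_i + min{ℓ−i+1,k} − 1] for 1 ≤ k ≤ ℓ, and φ̂_ℓ^k(i) := [−k + c_i, d_i + k − 1] for i ≤ ℓ−k and φ̂_ℓ^k(i) := [−ℓ+i+c_i, d_i+ℓ−i] for i > ℓ−k, where 1 ≤ k ≤ ℓ−1. Then: (a) applying to φ_ℓ^k the sink-mutation at vertex v = ℓ−k+1 on [v] (decrease the lower end of φ_ℓ^k(i) by 1 for all i ∈ [v]∖{v}, keep all other weights) yields φ̂_ℓ^k; and (b) applying to φ̂_ℓ^k the source-mutation at v = ℓ−k+1 on [v] (increase the upper end of φ̂_ℓ^k(i) by 1 for all i ∈ [v]∖{v}) yields φ_ℓ^{k+1}. -/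
/- STATEMENT 3: closed form of the weights in a Catalan descendant sequence.
Indices `i` are 1-indexed, `1 ≤ i ≤ ℓ`.  All weights are integral intervals, recorded by
their endpoints. -/

/-- Lower endpoint of `φ_ℓ^k(i) = [1 − min{ℓ−i+1,k} + c_i, d_i + min{ℓ−i+1,k} − 1]`. -/
def loPhi (ℓ : ℕ) (c : ℕ → ℤ) (k : ℕ) (i : ℕ) : ℤ :=
  1 - min ((ℓ : ℤ) - (i : ℤ) + 1) (k : ℤ) + c i

/-- Upper endpoint of `φ_ℓ^k(i)`. -/
def hiPhi (ℓ : ℕ) (d : ℕ → ℤ) (k : ℕ) (i : ℕ) : ℤ :=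
  d i + min ((ℓ : ℤ) - (i : ℤ) + 1) (k : ℤ) - 1

/-- Lower endpoint of `φ̂_ℓ^k(i)`: `−k + c_i` for `i ≤ ℓ−k`, and `−ℓ + i + c_i` otherwise. -/
def loHat (ℓ : ℕ) (c : ℕ → ℤ) (k : ℕ) (i : ℕ) : ℤ :=
  if i ≤ ℓ - k then -(k : ℤ) + c i else -(ℓ : ℤ) + (i : ℤ) + c i

/-- Upper endpoint of `φ̂_ℓ^k(i)`: `d_i + k − 1` for `i ≤ ℓ−k`, and `d_i + ℓ − i` otherwise. -/
def hiHat (ℓ : ℕ) (d : ℕ → ℤ) (k : ℕ) (i : ℕ) : ℤ :=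
  if i ≤ ℓ - k then d i + (k : ℤ) - 1 else d i + (ℓ : ℤ) - (i : ℤ)

/-- (a) the sink-mutation of `φ_ℓ^k` at `v = ℓ−k+1` on `[v]` (decrease the lower end by 1
for all `i ∈ [v]∖{v}`, i.e. `i ≤ ℓ−k`, keep all other weights) yields `φ̂_ℓ^k`; and
(b) the source-mutation of `φ̂_ℓ^k` at `v` on `[v]` (increase the upper end by 1 for all
`i ≤ ℓ−k`) yields `φ_ℓ^{k+1}`. -/
theorem stmt_3 (ℓ : ℕ) (hℓ : 2 ≤ ℓ) (c d : ℕ → ℤ) (hcd : ∀ i, c i ≤ d i) :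
    ∀ k, 1 ≤ k → k ≤ ℓ - 1 → ∀ i, 1 ≤ i → i ≤ ℓ →
      ((i ≤ ℓ - k →
        Set.Icc (loPhi ℓ c k i - 1) (hiPhi ℓ d k i)
          = Set.Icc (loHat ℓ c k i) (hiHat ℓ d k i) ∧
        Set.Icc (loHat ℓ c k i) (hiHat ℓ d k i + 1)
          = Set.Icc (loPhi ℓ c (k + 1) i) (hiPhi ℓ d (k + 1) i)) ∧
      (ℓ - k < i →
        Set.Icc (loPhi ℓ c k i) (hiPhi ℓ d k i)
          = Set.Icc (loHat ℓ c k i) (hiHat ℓ d k i) ∧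
        Set.Icc (loHat ℓ c k i) (hiHat ℓ d k i)
          = Set.Icc (loPhi ℓ c (k + 1) i) (hiPhi ℓ d (k + 1) i))) := by
  intro k hk hkl i hi hil
  refine ⟨fun h => ⟨?_, ?_⟩, fun h => ⟨?_, ?_⟩⟩ <;>
    unfold loPhi hiPhi loHat hiHat <;> split_ifs <;> (ext x; simp only [Set.mem_Icc]; omega)
end

section
/- Let A be a central arrangement with a modular coatom X ∈ L(A). Then t·χ(A, t) = (t − |A ∖ A_X|)·χ(A_X, t). -/
open scoped Classical

variable {K : Type*} [Field K] {n : ℕ}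

/-- A subspace is a (linear) hyperplane if it is the kernel of a nonzero linear form. -/
def IsHyperplane (H : Submodule K (Fin n → K)) : Prop :=
  ∃ α : (Fin n → K) →ₗ[K] K, α ≠ 0 ∧ LinearMap.ker α = H

/-- A central arrangement: a finite set of linear hyperplanes. -/
def IsCentralArr (A : Finset (Submodule K (Fin n → K))) : Prop :=
  ∀ H ∈ A, IsHyperplane H

/-- `X` is a flat of `A`, i.e. a member of the intersection lattice `L(A)`:
an intersection of a subfamily of `A` (the empty intersection being the whole space). -/
def IsFlat (A : Finset (Submodule K (Fin n → K))) (X : Submodule K (Fin n → K)) : Prop :=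
  ∃ B ⊆ A, X = B.inf id

/-- The characteristic polynomial of a central arrangement, via Whitney's theorem:
`χ(A, t) = Σ_{B ⊆ A} (−1)^{|B|} t^{dim ∩B}`. -/
noncomputable def chiW (A : Finset (Submodule K (Fin n → K))) : Polynomial ℤ :=
  ∑ B ∈ A.powerset,
    (-1 : Polynomial ℤ) ^ B.card * Polynomial.X ^ (Module.finrank K ↥(B.inf id))

section Aux
open Finset Module

lemma sum_powerset_union' {α M : Type*} [DecidableEq α] [AddCommMonoid M]
    {s t : Finset α} (h : Disjoint s t) (f : Finset α → M) :
    ∑ B ∈ (s ∪ t).powerset, f B = ∑ B₀ ∈ s.powerset, ∑ B₁ ∈ t.powerset, f (B₀ ∪ B₁) := by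
  induction t using Finset.induction generalizing f with
  | empty => simp
  | @insert a t' ha ih =>
    have hd' : Disjoint s t' := h.mono_right (Finset.subset_insert _ _)
    have has : a ∉ s := fun hs => Finset.disjoint_left.1 h hs (Finset.mem_insert_self a t')
    have hast : a ∉ s ∪ t' := by simp [has, ha]
    rw [Finset.union_insert, Finset.sum_powerset_insert hast, ih hd' f,
      ih hd' (fun B => f (insert a B)), ← Finset.sum_add_distrib]
    refine Finset.sum_congr rfl fun B₀ hB₀ => ?_
    have haB : a ∉ B₀ := fun hx => has (Finset.mem_powerset.1 hB₀ hx)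
    rw [Finset.sum_powerset_insert ha]
    congr 1
    refine Finset.sum_congr rfl fun B₁ _ => ?_
    rw [Finset.union_insert]

-- hyperplane dimension
lemma hyp_dim {H : Submodule K (Fin n → K)} (h : IsHyperplane H) :
    finrank K ↥H + 1 = n := by
  obtain ⟨α, hα0, hker⟩ := h
  have h1 := LinearMap.finrank_range_add_finrank_ker α
  have hr : LinearMap.range α = ⊤ := by
    obtain ⟨x, hx⟩ : ∃ x, α x ≠ 0 := by
      by_contra hc
      push_neg at hc
      exact hα0 (LinearMap.ext fun x => hc x)
    rw [LinearMap.range_eq_top]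
    intro c
    refine ⟨(c / α x) • x, ?_⟩
    rw [map_smul, smul_eq_mul, div_mul_cancel₀ _ hx]
  rw [hr, finrank_top, Module.finrank_self, hker] at h1
  rw [add_comm] at h1
  rw [h1, Module.finrank_fin_fun]

section Facts
variable {A : Finset (Submodule K (Fin n → K))} {X : Submodule K (Fin n → K)}

-- any flat strictly inside X equals the center
lemma flat_below (hflat : IsFlat A X)
    (hcoatom : finrank K ↥X = finrank K ↥(A.inf id) + 1)
    {Z : Submodule K (Fin n → K)} (hZ : IsFlat A Z) (hZX : Z ≤ X) (hne : Z ≠ X) :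
    Z = A.inf id := by
  obtain ⟨B, hBA, rfl⟩ := hZ
  have hCZ : A.inf id ≤ B.inf id := Finset.inf_mono hBA
  have h1 : finrank K ↥(B.inf id) ≤ finrank K ↥X := Submodule.finrank_mono hZX
  have h2 : finrank K ↥(B.inf id) ≠ finrank K ↥X := fun h =>
    hne (Submodule.eq_of_le_of_finrank_eq hZX h)
  have h3 : finrank K ↥(A.inf id) ≤ finrank K ↥(B.inf id) := Submodule.finrank_mono hCZ
  exact (Submodule.eq_of_le_of_finrank_le hCZ (by omega)).symm

lemma x_inf_flat (hflat : IsFlat A X)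
    (hcoatom : finrank K ↥X = finrank K ↥(A.inf id) + 1)
    {B₁ : Finset (Submodule K (Fin n → K))}
    (hB₁ : B₁ ⊆ A.filter (fun H => ¬ X ≤ H)) (hne : B₁.Nonempty) :
    X ⊓ B₁.inf id = A.inf id := by
  obtain ⟨BX, hBXA, hX⟩ := hflat
  have hB₁A : B₁ ⊆ A := hB₁.trans (Finset.filter_subset _ _)
  have hisflat : IsFlat A (X ⊓ B₁.inf id) :=
    ⟨BX ∪ B₁, Finset.union_subset hBXA hB₁A, by rw [Finset.inf_union, ← hX]⟩
  refine flat_below ⟨BX, hBXA, hX⟩ hcoatom hisflat inf_le_left fun h => ?_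
  obtain ⟨H, hH⟩ := hne
  have hXH : X ≤ H := by
    have : X ≤ B₁.inf id := by rw [← h]; exact inf_le_right
    exact this.trans (Finset.inf_le hH)
  exact (Finset.mem_filter.1 (hB₁ hH)).2 hXH

-- key modular dimension count
lemma mod_dim (hflat : IsFlat A X)
    (hcoatom : finrank K ↥X = finrank K ↥(A.inf id) + 1)
    {B₀ B₁ : Finset (Submodule K (Fin n → K))}
    (hB₀ : B₀ ⊆ A.filter (fun H => X ≤ H))
    (hB₁ : B₁ ⊆ A.filter (fun H => ¬ X ≤ H)) (hne : B₁.Nonempty) :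
    finrank K ↥(B₀.inf id ⊓ (X ⊔ B₁.inf id)) = finrank K ↥(B₀.inf id ⊓ B₁.inf id) + 1 := by
  set Y := B₀.inf id with hY
  set W := B₁.inf id with hW
  have hXY : X ≤ Y := Finset.le_inf fun H hH => (Finset.mem_filter.1 (hB₀ hH)).2
  have hmodlaw : (X ⊔ W) ⊓ Y = X ⊔ W ⊓ Y := sup_inf_assoc_of_le W hXY
  have hrk := Submodule.finrank_sup_add_finrank_inf_eq X (W ⊓ Y)
  have hXWY : X ⊓ (W ⊓ Y) = A.inf id := by
    rw [← inf_assoc, x_inf_flat hflat hcoatom hB₁ hne]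
    exact inf_eq_left.2 ((Finset.inf_mono (hB₀.trans (Finset.filter_subset _ _))).trans le_rfl)
  rw [hXWY, hcoatom] at hrk
  rw [inf_comm Y (X ⊔ W), hmodlaw, inf_comm W Y] at *
  omega

lemma sup_hyp_top (hA : IsCentralArr A) (hflat : IsFlat A X)
    (hcoatom : finrank K ↥X = finrank K ↥(A.inf id) + 1)
    {H : Submodule K (Fin n → K)} (hH : H ∈ A.filter (fun H => ¬ X ≤ H)) :
    X ⊔ H = ⊤ := by
  have hHA : H ∈ A := (Finset.mem_filter.1 hH).1
  have hd : finrank K ↥H + 1 = n := hyp_dim (hA H hHA)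
  have hrk := Submodule.finrank_sup_add_finrank_inf_eq X H
  have hXH : X ⊓ H = A.inf id := by
    have := x_inf_flat hflat hcoatom (B₁ := {H}) (by simpa using hH) ⟨H, Finset.mem_singleton_self H⟩
    simpa using this
  rw [hXH, hcoatom] at hrk
  apply Submodule.eq_top_of_finrank_eq
  rw [Module.finrank_fin_fun]
  omega

lemma exists_above (hA : IsCentralArr A) (hflat : IsFlat A X)
    (hmod : ∀ Y, IsFlat A Y → IsFlat A (X ⊔ Y))
    (hcoatom : finrank K ↥X = finrank K ↥(A.inf id) + 1)
    {B₁ : Finset (Submodule K (Fin n → K))}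
    (hB₁ : B₁ ⊆ A.filter (fun H => ¬ X ≤ H)) (hcard : 2 ≤ B₁.card) :
    ∃ H' ∈ A.filter (fun H => X ≤ H), X ⊔ B₁.inf id ≤ H' := by
  have hB₁A : B₁ ⊆ A := hB₁.trans (Finset.filter_subset _ _)
  set W := B₁.inf id with hW
  obtain ⟨H₁, hH₁, H₂, hH₂, hne12⟩ := Finset.one_lt_card.1 hcard
  have hne : B₁.Nonempty := ⟨H₁, hH₁⟩
  -- dimension of U = X ⊔ W
  have hrk := Submodule.finrank_sup_add_finrank_inf_eq X W
  rw [x_inf_flat hflat hcoatom hB₁ hne, hcoatom] at hrk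
  have hd1 : finrank K ↥H₁ + 1 = n := hyp_dim (hA H₁ (hB₁A hH₁))
  have hd2 : finrank K ↥H₂ + 1 = n := hyp_dim (hA H₂ (hB₁A hH₂))
  have hW12 : W ≤ H₁ ⊓ H₂ := le_inf (Finset.inf_le hH₁) (Finset.inf_le hH₂)
  have hWd : finrank K ↥W ≤ finrank K ↥(H₁ ⊓ H₂) := Submodule.finrank_mono hW12
  have hrk2 := Submodule.finrank_sup_add_finrank_inf_eq H₁ H₂
  have hsup : finrank K ↥(H₁ ⊔ H₂) = n := by
    have hle : finrank K ↥(H₁ ⊔ H₂) ≤ n := by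
      have := Submodule.finrank_le (H₁ ⊔ H₂)
      rwa [Module.finrank_fin_fun] at this
    by_contra hc
    have h1 : finrank K ↥(H₁ ⊔ H₂) ≤ finrank K ↥H₁ := by
      have := Submodule.finrank_mono (le_sup_left : H₁ ≤ H₁ ⊔ H₂)
      omega
    have hEq : H₁ = H₁ ⊔ H₂ := Submodule.eq_of_le_of_finrank_le le_sup_left h1
    have h2 : H₂ ≤ H₁ := by rw [hEq]; exact le_sup_right
    exact hne12 ((Submodule.eq_of_le_of_finrank_le h2 (by omega)).symm)
  have hUn : finrank K ↥(X ⊔ W) < n := by omega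
  -- U is a flat, hence an intersection of hyperplanes of A; nonempty since U ≠ ⊤
  obtain ⟨B, hBA, hU⟩ := hmod W ⟨B₁, hB₁A, rfl⟩
  have hBne : B.Nonempty := by
    rcases B.eq_empty_or_nonempty with h | h
    · exfalso
      rw [h] at hU
      simp only [Finset.inf_empty] at hU
      rw [hU] at hUn
      rw [finrank_top, Module.finrank_fin_fun] at hUn
      omega
    · exact h
  obtain ⟨H', hH'⟩ := hBne
  refine ⟨H', ?_, ?_⟩
  · refine Finset.mem_filter.2 ⟨hBA hH', ?_⟩
    calc X ≤ X ⊔ W := le_sup_left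
    _ ≤ H' := by rw [hU]; exact Finset.inf_le hH'
  · rw [hU]; exact Finset.inf_le hH'

end Facts


end Aux

open Finset Module in
/-- Let `A` be a central arrangement and `X ∈ L(A)` a modular coatom (i.e.
`X + Y ∈ L(A)` for every `Y ∈ L(A)`, and `X` has corank 1 in `L(A)`, i.e.
`dim X = dim (∩ A) + 1`).  Then `t·χ(A, t) = (t − |A ∖ A_X|)·χ(A_X, t)`, where
`A_X = {H ∈ A : X ⊆ H}` is the localization of `A` at `X`. -/
theorem stmt_13 (A : Finset (Submodule K (Fin n → K))) (hA : IsCentralArr A)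
    (X : Submodule K (Fin n → K)) (hflat : IsFlat A X)
    (hmod : ∀ Y, IsFlat A Y → IsFlat A (X ⊔ Y))
    (hcoatom : Module.finrank K ↥X = Module.finrank K ↥(A.inf id) + 1) :
    Polynomial.X * chiW A =
      (Polynomial.X - Polynomial.C (((A.filter (fun H => ¬ X ≤ H)).card : ℤ))) *
        chiW (A.filter (fun H => X ≤ H)) := by

  classical
  set A₀ := A.filter (fun H => X ≤ H) with hA₀
  set A₁ := A.filter (fun H => ¬ X ≤ H) with hA₁
  have hdisj : Disjoint A₀ A₁ := Finset.disjoint_filter_filter_not A A (fun H => X ≤ H)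
  have hunion : A₀ ∪ A₁ = A := Finset.filter_union_filter_not_eq _ A
  have lhs_eq : Polynomial.X * chiW A
      = ∑ B₁ ∈ A₁.powerset, ∑ B₀ ∈ A₀.powerset,
          (-1 : Polynomial ℤ) ^ (B₀.card + B₁.card) *
            Polynomial.X ^ (finrank K ↥(B₀.inf id ⊓ B₁.inf id) + 1) := by
    rw [show A = A₀ ∪ A₁ from hunion.symm]
    simp only [chiW]
    rw [Finset.mul_sum, sum_powerset_union' hdisj, Finset.sum_comm]
    refine Finset.sum_congr rfl fun B₁ hB₁ => Finset.sum_congr rfl fun B₀ hB₀ => ?_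
    have hdisj' : Disjoint B₀ B₁ :=
      hdisj.mono (Finset.mem_powerset.1 hB₀) (Finset.mem_powerset.1 hB₁)
    rw [Finset.card_union_of_disjoint hdisj', Finset.inf_union]
    ring
  have key : ∀ B₁ ∈ A₁.powerset,
      (∑ B₀ ∈ A₀.powerset, (-1 : Polynomial ℤ) ^ (B₀.card + B₁.card) *
          Polynomial.X ^ (finrank K ↥(B₀.inf id ⊓ B₁.inf id) + 1))
      = (if B₁ = ∅ then Polynomial.X * chiW A₀ else 0)
        + (if B₁.card = 1 then -chiW A₀ else 0) := by
    intro B₁ hB₁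
    have hB₁sub : B₁ ⊆ A₁ := Finset.mem_powerset.1 hB₁
    rcases eq_or_ne B₁ ∅ with rfl | hne
    · rw [if_pos rfl, Finset.card_empty, if_neg (by norm_num), add_zero]
      simp only [chiW]
      rw [Finset.mul_sum]
      refine Finset.sum_congr rfl fun B₀ _ => ?_
      rw [Finset.inf_empty, inf_top_eq, add_zero]
      ring
    rcases eq_or_ne B₁.card 1 with h1 | h1
    · obtain ⟨H, rfl⟩ := Finset.card_eq_one.1 h1
      have hHA₁ : H ∈ A₁ := hB₁sub (Finset.mem_singleton_self H)
      rw [if_neg hne, if_pos h1, zero_add]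
      have hterm : ∀ B₀ ∈ A₀.powerset,
          (-1 : Polynomial ℤ) ^ (B₀.card + ({H} : Finset (Submodule K (Fin n → K))).card) *
            Polynomial.X ^ (finrank K ↥(B₀.inf id ⊓ ({H} : Finset (Submodule K (Fin n → K))).inf id) + 1)
          = -((-1 : Polynomial ℤ) ^ B₀.card * Polynomial.X ^ (finrank K ↥(B₀.inf id))) := by
        intro B₀ hB₀
        have hd := mod_dim hflat hcoatom (Finset.mem_powerset.1 hB₀)
          (show ({H} : Finset (Submodule K (Fin n → K))) ⊆ A₁ by
            simpa using hHA₁) ⟨H, Finset.mem_singleton_self H⟩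
        rw [Finset.inf_singleton] at hd ⊢
        rw [show (id H : Submodule K (Fin n → K)) = H from rfl] at hd ⊢
        rw [sup_hyp_top hA hflat hcoatom hHA₁, inf_top_eq] at hd
        rw [← hd, Finset.card_singleton]
        ring
      rw [Finset.sum_congr rfl hterm]
      simp only [chiW]
      rw [← Finset.sum_neg_distrib]
    · -- B₁ has at least two elements: the inner sum vanishes
      rw [if_neg hne, if_neg h1, add_zero]
      have hcard2 : 2 ≤ B₁.card := by
        have h0 : 0 < B₁.card := Finset.card_pos.2 (Finset.nonempty_of_ne_empty hne)
        omega
      have hne' : B₁.Nonempty := Finset.nonempty_of_ne_empty hne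
      obtain ⟨H', hH'A₀, hUH'⟩ := exists_above hA hflat hmod hcoatom hB₁sub hcard2
      set U := X ⊔ B₁.inf id with hU
      have hterm : ∀ B₀ ∈ A₀.powerset,
          (-1 : Polynomial ℤ) ^ (B₀.card + B₁.card) *
            Polynomial.X ^ (finrank K ↥(B₀.inf id ⊓ B₁.inf id) + 1)
          = (-1 : Polynomial ℤ) ^ B₁.card *
              ((-1 : Polynomial ℤ) ^ B₀.card * Polynomial.X ^ (finrank K ↥(B₀.inf id ⊓ U))) := by
        intro B₀ hB₀
        have hd := mod_dim hflat hcoatom (Finset.mem_powerset.1 hB₀) hB₁sub hne'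
        rw [← hU] at hd
        rw [hd]
        ring
      rw [Finset.sum_congr rfl hterm, ← Finset.mul_sum]
      have hzero : (∑ B₀ ∈ A₀.powerset,
          (-1 : Polynomial ℤ) ^ B₀.card * Polynomial.X ^ (finrank K ↥(B₀.inf id ⊓ U))) = 0 := by
        rw [show A₀ = insert H' (A₀.erase H') from (Finset.insert_erase hH'A₀).symm,
          Finset.sum_powerset_insert (Finset.notMem_erase H' A₀), ← Finset.sum_add_distrib]
        refine Finset.sum_eq_zero fun t ht => ?_
        have hH't : H' ∉ t := fun hx => Finset.notMem_erase H' A₀ (Finset.mem_powerset.1 ht hx)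
        rw [Finset.card_insert_of_notMem hH't, Finset.inf_insert]
        rw [show (id H' : Submodule K (Fin n → K)) = H' from rfl]
        rw [inf_assoc, inf_eq_right.2 (le_trans inf_le_right hUH')]
        ring
      rw [hzero, mul_zero]
  rw [lhs_eq, Finset.sum_congr rfl key, Finset.sum_add_distrib]
  rw [Finset.sum_ite_eq' A₁.powerset ∅ (fun _ => Polynomial.X * chiW A₀),
    if_pos (Finset.empty_mem_powerset A₁)]
  rw [← Finset.sum_filter, Finset.sum_const]
  rw [show A₁.powerset.filter (fun B => B.card = 1) = Finset.powersetCard 1 A₁ from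
    (Finset.powersetCard_eq_filter).symm, Finset.card_powersetCard, Nat.choose_one_right]
  rw [nsmul_eq_mul, Polynomial.C_eq_natCast]
  ring
end
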